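/- For (x,y,z), (x',y',z') in P = {(x,y,z) ∈ ℝ³ : x ≤ y ≤ z ≤ x+1, 0 ≤ x+y+z ≤ 1} with both points in the interior of P (i.e., all defining inequalities strict), p(x,y,z) = p(x',y',z') implies (x,y,z) = (x',y',z'), where p(x,y,z) = {e^{2πix}, e^{2πiy}, e^{2πiz}}. -/

import Mathlib

open Set Real

/-- The `k`-th symmetric potency: nonempty subsets of `X` of cardinality at most `k`. -/
def SymPot (X : Type*) (k : ℕ) : Type _ :=
  {A : Set X // 0 < A.ncard ∧ A.ncard ≤ k}

/-- The quotient topology on `exp_k X` induced by `π : X^k → exp_k X`. -/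
def symPotProj (X : Type*) (k : ℕ) [NeZero k] : (Fin k → X) → SymPot X k :=
  fun x => ⟨Set.range x, by
    constructor
    · exact (Set.ncard_pos (Set.finite_range x)).mpr (Set.range_nonempty x)
    · calc (Set.range x).ncard = Nat.card (Set.range x) := (Nat.card_coe_set_eq _).symm
        _ ≤ Nat.card (Fin k) := Finite.card_range_le x
        _ = k := Nat.card_eq_fintype_card.trans (Fintype.card_fin k)⟩

instance (X : Type*) (k : ℕ) [TopologicalSpace X] [NeZero k] :
    TopologicalSpace (SymPot X k) :=
  TopologicalSpace.coinduced (symPotProj X k) inferInstance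

/-- Morton's prism `P`. -/
def prismP : Set (ℝ × ℝ × ℝ) :=
  {v | v.1 ≤ v.2.1 ∧ v.2.1 ≤ v.2.2 ∧ v.2.2 ≤ v.1 + 1 ∧
    0 ≤ v.1 + v.2.1 + v.2.2 ∧ v.1 + v.2.1 + v.2.2 ≤ 1}

/-- The subset `{a, b, c}` of the circle, as an element of `exp_3 S¹`. -/
def tripleSet (a b c : Circle) : SymPot Circle 3 :=
  ⟨{a, b, c}, by
    refine ⟨(Set.ncard_pos (Set.toFinite _)).mpr ⟨a, by simp⟩, ?_⟩
    calc ({a, b, c} : Set Circle).ncard ≤ ({b, c} : Set Circle).ncard + 1 :=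
          Set.ncard_insert_le a _
      _ ≤ (({c} : Set Circle).ncard + 1) + 1 := by
          exact Nat.add_le_add_right (Set.ncard_insert_le b _) 1
      _ = 3 := by rw [Set.ncard_singleton]⟩

/-- The map `p : P → exp_3 S¹`, `p (x,y,z) = {e^{2πix}, e^{2πiy}, e^{2πiz}}`. -/
noncomputable def prismMap (v : prismP) : SymPot Circle 3 :=
  tripleSet (Circle.exp (2 * π * v.1.1)) (Circle.exp (2 * π * v.1.2.1))
    (Circle.exp (2 * π * v.1.2.2))

/-
Lifts of three distinct points of the circle to reals `x < y < z < x + 1` are unique up to the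
shift `(x, y, z) ↦ (y, z, x + 1)` and its inverse: fixing the residue class of `x` mod `1`
pins down `y` and `z`, since each of them is the unique lift of its point in `(x, x + 1)`. The
shift raises `x + y + z` by `1`, so at most one lift has `0 < x + y + z < 1`.
-/

lemma circle_exp_two_pi_mul_eq_iff {a b : ℝ} :
    Circle.exp (2 * π * a) = Circle.exp (2 * π * b) ↔ ∃ m : ℤ, a = b + m := by
  rw [Circle.exp_eq_exp]
  refine exists_congr fun m => ?_
  constructor <;> intro h
  · nlinarith [pi_pos]
  · rw [h]; ring

lemma circle_exp_two_pi_mul_add_one (t : ℝ) :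
    Circle.exp (2 * π * (t + 1)) = Circle.exp (2 * π * t) := by
  rw [mul_add, mul_one, Circle.exp_add_two_pi]

lemma intCast_eq_zero_of_add_mem_Ioo {a s : ℝ} {k : ℤ} (hs : s ∈ Ioo a (a + 1))
    (hsk : s + k ∈ Ioo a (a + 1)) : k = 0 := by
  obtain ⟨hs₁, hs₂⟩ := hs
  obtain ⟨hsk₁, hsk₂⟩ := hsk
  have hlt : k < 1 := by exact_mod_cast (show (k : ℝ) < 1 by linarith)
  have hgt : -1 < k := by exact_mod_cast (show (-1 : ℝ) < k by linarith)
  omega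

section Lifts

variable {x y z : ℝ} (hxy : x < y) (hyz : y < z) (hzx : z < x + 1)
include hxy hyz hzx

lemma eq_add_of_circle_exp_mem_of_mem_Ioo {m : ℤ} {w : ℝ} (hw : w ∈ Ioo (x + m) (x + m + 1))
    (he : Circle.exp (2 * π * w) ∈
      ({Circle.exp (2 * π * x), Circle.exp (2 * π * y), Circle.exp (2 * π * z)} : Set Circle)) :
    w = y + m ∨ w = z + m := by
  obtain ⟨hw₁, hw₂⟩ := hw
  rcases he with he | he | he <;> obtain ⟨k, rfl⟩ := circle_exp_two_pi_mul_eq_iff.mp he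
  · have h₁ : m < k := by exact_mod_cast (show (m : ℝ) < k by linarith)
    have h₂ : k < m + 1 := by exact_mod_cast (show (k : ℝ) < m + 1 by linarith)
    omega
  · left
    have := intCast_eq_zero_of_add_mem_Ioo (a := x) (s := y) (k := k - m)
      ⟨hxy, by linarith⟩ ⟨by push_cast; linarith, by push_cast; linarith⟩
    rw [sub_eq_zero.mp this]
  · right
    have := intCast_eq_zero_of_add_mem_Ioo (a := x) (s := z) (k := k - m)
      ⟨by linarith, hzx⟩ ⟨by push_cast; linarith, by push_cast; linarith⟩
    rw [sub_eq_zero.mp this]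

lemma eq_add_of_lift_of_circle_exp_mem {x' y' z' : ℝ}
    (hxy' : x' < y') (hyz' : y' < z') (hzx' : z' < x' + 1) {m : ℤ} (hm : x' = x + m)
    (hy' : Circle.exp (2 * π * y') ∈
      ({Circle.exp (2 * π * x), Circle.exp (2 * π * y), Circle.exp (2 * π * z)} : Set Circle))
    (hz' : Circle.exp (2 * π * z') ∈
      ({Circle.exp (2 * π * x), Circle.exp (2 * π * y), Circle.exp (2 * π * z)} : Set Circle)) :
    y' = y + m ∧ z' = z + m := by
  subst hm
  rcases eq_add_of_circle_exp_mem_of_mem_Ioo hxy hyz hzx ⟨hxy', by linarith⟩ hy' with hy | hy <;>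
  rcases eq_add_of_circle_exp_mem_of_mem_Ioo hxy hyz hzx ⟨by linarith, hzx'⟩ hz' with hz | hz
  all_goals first | exact ⟨hy, hz⟩ | (exfalso; linarith)

end Lifts

lemma circle_exp_triple_shift (x y z : ℝ) :
    ({Circle.exp (2 * π * y), Circle.exp (2 * π * z), Circle.exp (2 * π * (x + 1))} : Set Circle) =
      {Circle.exp (2 * π * x), Circle.exp (2 * π * y), Circle.exp (2 * π * z)} := by
  rw [circle_exp_two_pi_mul_add_one]
  ext
  simp only [mem_insert_iff, mem_singleton_iff]
  tauto

/-- `p` is injective on the interior of `P`. -/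
theorem prismMap_injOn_interior (x y z x' y' z' : ℝ)
    (h1 : x < y) (h2 : y < z) (h3 : z < x + 1)
    (h4 : 0 < x + y + z) (h5 : x + y + z < 1)
    (h1' : x' < y') (h2' : y' < z') (h3' : z' < x' + 1)
    (h4' : 0 < x' + y' + z') (h5' : x' + y' + z' < 1)
    (hp : tripleSet (Circle.exp (2 * π * x)) (Circle.exp (2 * π * y))
            (Circle.exp (2 * π * z)) =
          tripleSet (Circle.exp (2 * π * x')) (Circle.exp (2 * π * y'))
            (Circle.exp (2 * π * z'))) :
    x = x' ∧ y = y' ∧ z = z' := by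
  have hS : ({Circle.exp (2 * π * x'), Circle.exp (2 * π * y'), Circle.exp (2 * π * z')} :
      Set Circle) ⊆ {Circle.exp (2 * π * x), Circle.exp (2 * π * y), Circle.exp (2 * π * z)} :=
    (congrArg Subtype.val hp).symm.subset
  have hy' := hS (by simp : Circle.exp (2 * π * y') ∈ _)
  have hz' := hS (by simp : Circle.exp (2 * π * z') ∈ _)
  have hS₁ := circle_exp_triple_shift x y z
  have hS₂ := (circle_exp_triple_shift y z (x + 1)).trans hS₁
  rcases hS (mem_insert _ _) with hx' | hx' | hx' <;>
    obtain ⟨m, hm⟩ := circle_exp_two_pi_mul_eq_iff.mp hx'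
  · obtain ⟨rfl, rfl⟩ := eq_add_of_lift_of_circle_exp_mem h1 h2 h3 h1' h2' h3' hm hy' hz'
    have := intCast_eq_zero_of_add_mem_Ioo (a := 0) (s := x + y + z) (k := 3 * m)
      ⟨h4, by linarith⟩ ⟨by push_cast; linarith, by push_cast; linarith⟩
    obtain rfl : m = 0 := by omega
    simp [hm]
  · obtain ⟨rfl, rfl⟩ := eq_add_of_lift_of_circle_exp_mem h2 h3 (by linarith) h1' h2' h3' hm
      (by rwa [hS₁]) (by rwa [hS₁])
    have := intCast_eq_zero_of_add_mem_Ioo (a := 0) (s := x + y + z) (k := 3 * m + 1)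
      ⟨h4, by linarith⟩ ⟨by push_cast; linarith, by push_cast; linarith⟩
    omega
  · obtain ⟨rfl, rfl⟩ := eq_add_of_lift_of_circle_exp_mem (y := x + 1) (z := y + 1) h3
      (by linarith) (by linarith) h1' h2' h3' hm (by rwa [hS₂]) (by rwa [hS₂])
    have := intCast_eq_zero_of_add_mem_Ioo (a := 0) (s := x + y + z) (k := 3 * m + 2)
      ⟨h4, by linarith⟩ ⟨by push_cast; linarith, by push_cast; linarith⟩
    omega
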